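/- arXiv:2201.02189 — 3 statements merged into one kernel-verified Lean document; each statement's English description precedes it below -/
import Mathlib

section
/- If L is a lattice of finite length, then the length of the lattice RCSub(L) equals 1 + length(L). -/
open Set

variable {α : Type*}

/-- `S` is closed under taking relative complements in `L`. -/
def RCClosed [Lattice α] (S : Set α) : Prop :=
  ∀ u ∈ S, ∀ x ∈ S, ∀ v ∈ S, ∀ y : α, x ⊓ y = u → x ⊔ y = v → y ∈ S

/-- `RCSub L`: the empty set together with the RC-closed sublattices of `L`,
ordered by inclusion (as a subtype of `Set L`). -/
abbrev RCSub (α : Type*) [Lattice α] := {S : Set α // IsSublattice S ∧ RCClosed S}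

/-- The least RC-closed sublattice of `L` containing `X`. -/
def rcg (α : Type*) [Lattice α] (X : Set α) : Set α :=
  ⋂₀ {S : Set α | (IsSublattice S ∧ RCClosed S) ∧ X ⊆ S}

/-- `C` is a maximal chain within the set `s`. -/
def MaxChainIn [Preorder α] (s C : Set α) : Prop :=
  IsChain (· ≤ ·) C ∧ C ⊆ s ∧
    ∀ D : Set α, IsChain (· ≤ ·) D → D ⊆ s → C ⊆ D → C = D

/-- A ranked order: any two maximal chains of every principal ideal
have the same finite length. -/
def RankedOrder (β : Type*) [Preorder β] : Prop :=
  ∀ a : β, ∀ C D : Set β, MaxChainIn (Set.Iic a) C → MaxChainIn (Set.Iic a) D →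
    C.Finite ∧ D.Finite ∧ C.ncard = D.ncard

/-- 2-distributivity in the sense of Huhn. -/
def TwoDistrib (α : Type*) [Lattice α] : Prop :=
  ∀ x y₀ y₁ y₂ : α,
    x ⊓ (y₀ ⊔ y₁ ⊔ y₂) = (x ⊓ (y₁ ⊔ y₂)) ⊔ (x ⊓ (y₀ ⊔ y₂)) ⊔ (x ⊓ (y₀ ⊔ y₁))

section ChainHelpers

variable {β : Type*} [Preorder β]

/-- Lists forming strictly increasing chains inside `s`. -/
def Set.subchain (s : Set β) : Set (List β) :=
  {l | List.IsChain (· < ·) l ∧ ∀ i ∈ l, i ∈ s}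

lemma length_le_chainHeight_of_mem_subchain {s : Set β} {l : List β} (hl : l ∈ s.subchain) :
    (l.length : ℕ∞) ≤ s.chainHeight (· < ·) := by
  classical
  have hp : l.Pairwise (· < ·) := List.isChain_iff_pairwise.mp hl.1
  have hnd : l.Nodup := hp.imp (fun h => ne_of_lt h)
  have hp' : l.Pairwise (fun a b : β => a < b ∨ b < a) := hp.imp Or.inl
  haveI : Std.Symm (fun a b : β => a < b ∨ b < a) := ⟨fun _ _ h => h.symm⟩
  have h1 : ((l.toFinset : Set β)).encard = l.length := by
    rw [Set.encard_coe_eq_coe_finsetCard, List.toFinset_card_of_nodup hnd]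
  rw [← h1]
  apply Set.encard_le_chainHeight_of_isChain
  · intro x hx
    exact hl.2 x (List.mem_toFinset.mp hx)
  · intro x hx y hy hxy
    exact hp'.forall (List.mem_toFinset.mp hx) (List.mem_toFinset.mp hy) hxy

lemma exists_list_of_isChain : ∀ (n : ℕ) (t : Set β), t.encard = n → IsChain (· < ·) t →
    ∃ l : List β, List.IsChain (· < ·) l ∧ (∀ x ∈ l, x ∈ t) ∧ l.length = n := by
  intro n
  induction n with
  | zero => intro t _ _; exact ⟨[], List.IsChain.nil, by simp, rfl⟩
  | succ k ih =>
    intro t ht hc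
    have hfin : t.Finite := Set.finite_of_encard_eq_coe ht
    have hne : t.Nonempty := by
      rw [Set.nonempty_iff_ne_empty]
      rintro rfl
      rw [Set.encard_empty] at ht
      exact Nat.cast_ne_zero.mpr (Nat.succ_ne_zero k) ht.symm
    obtain ⟨m, hm⟩ := hfin.exists_minimal hne
    have hmt : m ∈ t := hm.prop
    have ht' : (t \ {m}).encard = k := by
      have h2 := Set.encard_sdiff_singleton_add_one hmt
      rw [ht] at h2
      push_cast at h2
      apply le_antisymm
      · exact (ENat.add_le_add_iff_right (by simp)).mp h2.le
      · exact (ENat.add_le_add_iff_right (by simp)).mp h2.ge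
    obtain ⟨l, hl1, hl2, hl3⟩ := ih (t \ {m}) ht' (hc.mono diff_subset)
    have hgt : ∀ x ∈ l, m < x := by
      intro x hx
      have hx' := hl2 x hx
      rcases hc hmt hx'.1 (fun e => hx'.2 e.symm) with h | h
      · exact h
      · exact absurd (hm.2 hx'.1 h.le) h.not_ge
    refine ⟨m :: l, List.isChain_iff_pairwise.mpr
      (List.pairwise_cons.mpr ⟨hgt, List.isChain_iff_pairwise.mp hl1⟩), ?_, by simp [hl3]⟩
    intro x hx
    rcases List.mem_cons.mp hx with rfl | hx
    · exact hmt
    · exact (hl2 x hx).1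

lemma exists_chain_of_le_chainHeight (s : Set β) {n : ℕ}
    (hn : (n : ℕ∞) ≤ s.chainHeight (· < ·)) : ∃ l ∈ s.subchain, l.length = n := by
  obtain ⟨t, hts, hte, htc⟩ := Set.exists_isChain_of_le_chainHeight n hn
  obtain ⟨l, hl1, hl2, hl3⟩ := exists_list_of_isChain n t hte htc
  exact ⟨l, ⟨hl1, fun x hx => hts (hl2 x hx)⟩, hl3⟩

lemma le_chainHeight_iff {s : Set β} {n : ℕ} :
    (n : ℕ∞) ≤ s.chainHeight (· < ·) ↔ ∃ l ∈ s.subchain, l.length = n := by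
  constructor
  · exact exists_chain_of_le_chainHeight s
  · rintro ⟨l, hl, rfl⟩
    exact length_le_chainHeight_of_mem_subchain hl

lemma chainHeight_insert_aux (a : β) {s : Set β} (ha : a ∉ s)
    (hx : ∀ b ∈ s, a < b ∨ b < a) :
    (insert a s).chainHeight (· < ·) = s.chainHeight (· < ·) + 1 := by
  apply le_antisymm
  · rw [Set.chainHeight_eq_iSup]
    refine iSup_le fun t => ?_
    obtain ⟨t, hts, htc⟩ := t
    calc t.encard ≤ (t \ {a}).encard + 1 := (Set.encard_le_encard (Set.subset_insert a t)).trans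
          (by rw [← Set.insert_diff_singleton]; exact Set.encard_insert_le _ _)
      _ ≤ s.chainHeight (· < ·) + 1 := by
        gcongr
        apply Set.encard_le_chainHeight_of_isChain _ _ _ (htc.mono diff_subset)
        intro x hx
        rcases hts hx.1 with h | h
        · exact absurd h hx.2
        · exact h
  · refine ENat.forall_natCast_le_iff_le.mp fun n hn => ?_
    cases n with
    | zero => simp
    | succ k =>
      have hk : (k : ℕ∞) ≤ s.chainHeight (· < ·) := by
        push_cast at hn
        exact (ENat.add_le_add_iff_right (by simp)).mp hn
      obtain ⟨t, hts, hte, htc⟩ := Set.exists_isChain_of_le_chainHeight k hk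
      have hat : a ∉ t := fun h => ha (hts h)
      have hc : IsChain (· < ·) (insert a t) := by
        apply htc.insert
        intro b hb _
        exact hx b (hts hb)
      have := Set.encard_le_chainHeight_of_isChain (insert a s) (insert a t)
        (Set.insert_subset_insert hts) hc
      rw [Set.encard_insert_of_notMem hat, hte] at this
      exact_mod_cast this

lemma chainHeight_insert_of_forall_lt (a : β) {s : Set β} (hx : ∀ b ∈ s, b < a) :
    (insert a s).chainHeight (· < ·) = s.chainHeight (· < ·) + 1 :=
  chainHeight_insert_aux a (fun h => lt_irrefl a (hx a h)) (fun b hb => Or.inr (hx b hb))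

lemma chainHeight_insert_of_forall_gt (a : β) {s : Set β} (hx : ∀ b ∈ s, a < b) :
    (insert a s).chainHeight (· < ·) = s.chainHeight (· < ·) + 1 :=
  chainHeight_insert_aux a (fun h => lt_irrefl a (hx a h)) (fun b hb => Or.inl (hx b hb))

end ChainHelpers

section Auxiliary

variable [Lattice α]

lemma rcClosed_Ici (a : α) : RCClosed (Ici a) := by
  intro u hu x _ v _ y h1 _
  exact le_trans hu (h1 ▸ inf_le_right)

lemma isSublattice_Ici (a : α) : IsSublattice (Ici a) := by
  constructor
  · intro x hx y _
    exact le_trans hx le_sup_left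
  · intro x hx y hy
    exact le_inf hx hy

lemma rcClosed_empty : RCClosed (∅ : Set α) := by
  intro u hu
  exact absurd hu (notMem_empty u)

/-- Key lemma: an RC-closed subset of a sublattice `T` whose chain height is at least
that of `T` (finite) must equal `T`. -/
lemma rc_key : ∀ (n : ℕ) (S T : Set α), S ⊆ T → IsSublattice T → RCClosed S →
    T.chainHeight (· < ·) ≤ (n : ℕ∞) → (n : ℕ∞) ≤ S.chainHeight (· < ·) → S = T := by
  intro n
  induction n using Nat.strong_induction_on with
  | _ n IH =>
  intro S T hST hT hS hTn hSn
  obtain ⟨l, hl, hlen⟩ := exists_chain_of_le_chainHeight S hSn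
  have hlS : ∀ x ∈ l, x ∈ S := hl.2
  have hpw : ∀ (i j : ℕ) (hi : i < l.length) (hj : j < l.length), i < j → l[i] < l[j] :=
    fun i j hi hj hij =>
      List.pairwise_iff_getElem.mp (List.isChain_iff_pairwise.mp hl.1) i j hi hj hij
  match n, IH, hTn, hSn, hlen with
  | 0, _, hTn, _, _ =>
    have hTe : T = ∅ := (chainHeight_eq_zero_iff T (· < ·)).mp (le_antisymm (by simpa using hTn) zero_le)
    rw [hTe]
    exact subset_empty_iff.mp (hTe ▸ hST)
  | 1, _, hTn, _, hlen =>
    have h0 : 0 < l.length := by omega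
    set a := l[0] with ha_def
    have ha : a ∈ S := hlS _ (List.getElem_mem h0)
    have hx : ∀ t ∈ T, a ≤ t := by
      intro t ht
      by_contra hc
      have h1 : a ⊓ t < a := lt_of_le_of_ne inf_le_left (fun e => hc (e ▸ inf_le_right))
      have hmem : [a ⊓ t, a] ∈ T.subchain := by
        refine ⟨by simp [List.isChain_cons, h1], ?_⟩
        intro i hi
        simp only [List.mem_cons, List.not_mem_nil, or_false] at hi
        rcases hi with rfl | rfl
        exacts [hT.infClosed (hST ha) ht, hST ha]
      have h2 := le_trans (length_le_chainHeight_of_mem_subchain hmem) hTn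
      have h3 : (2 : ℕ) ≤ 1 := by exact_mod_cast h2
      omega
    have hy : ∀ t ∈ T, t ≤ a := by
      intro t ht
      by_contra hc
      have h1 : a < a ⊔ t := lt_of_le_of_ne le_sup_left (fun e => hc (le_trans le_sup_right e.symm.le))
      have hmem : [a, a ⊔ t] ∈ T.subchain := by
        refine ⟨by simp [List.isChain_cons, h1], ?_⟩
        intro i hi
        simp only [List.mem_cons, List.not_mem_nil, or_false] at hi
        rcases hi with rfl | rfl
        exacts [hST ha, hT.supClosed (hST ha) ht]
      have h2 := le_trans (length_le_chainHeight_of_mem_subchain hmem) hTn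
      have h3 : (2 : ℕ) ≤ 1 := by exact_mod_cast h2
      omega
    refine Set.Subset.antisymm hST (fun t ht => ?_)
    have : t = a := le_antisymm (hy t ht) (hx t ht)
    rwa [this]
  | 2, _, hTn, _, hlen =>
    have h0 : 0 < l.length := by omega
    have h1 : 1 < l.length := by omega
    set a := l[0] with ha_def
    set b := l[1] with hb_def
    have ha : a ∈ S := hlS _ (List.getElem_mem h0)
    have hb : b ∈ S := hlS _ (List.getElem_mem h1)
    have hab : a < b := hpw 0 1 h0 h1 (by omega)
    have hx : ∀ t ∈ T, a ≤ t := by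
      intro t ht
      by_contra hc
      have hlt : a ⊓ t < a := lt_of_le_of_ne inf_le_left (fun e => hc (e ▸ inf_le_right))
      have hmem : [a ⊓ t, a, b] ∈ T.subchain := by
        refine ⟨by simp [List.isChain_cons, hlt, hab], ?_⟩
        intro i hi
        simp only [List.mem_cons, List.not_mem_nil, or_false] at hi
        rcases hi with rfl | rfl | rfl
        exacts [hT.infClosed (hST ha) ht, hST ha, hST hb]
      have h2 := le_trans (length_le_chainHeight_of_mem_subchain hmem) hTn
      have h3 : (3 : ℕ) ≤ 2 := by exact_mod_cast h2
      omega
    have hy : ∀ t ∈ T, t ≤ b := by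
      intro t ht
      by_contra hc
      have hlt : b < b ⊔ t := lt_of_le_of_ne le_sup_left (fun e => hc (le_trans le_sup_right e.symm.le))
      have hmem : [a, b, b ⊔ t] ∈ T.subchain := by
        refine ⟨by simp [List.isChain_cons, hlt, hab], ?_⟩
        intro i hi
        simp only [List.mem_cons, List.not_mem_nil, or_false] at hi
        rcases hi with rfl | rfl | rfl
        exacts [hST ha, hST hb, hT.supClosed (hST hb) ht]
      have h2 := le_trans (length_le_chainHeight_of_mem_subchain hmem) hTn
      have h3 : (3 : ℕ) ≤ 2 := by exact_mod_cast h2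
      omega
    refine Set.Subset.antisymm hST (fun t ht => ?_)
    by_cases hta : t = a
    · rwa [hta]
    by_cases htb : t = b
    · rwa [htb]
    exfalso
    have h1t : a < t := lt_of_le_of_ne (hx t ht) (Ne.symm hta)
    have h2t : t < b := lt_of_le_of_ne (hy t ht) htb
    have hmem : [a, t, b] ∈ T.subchain := by
      refine ⟨by simp [List.isChain_cons, h1t, h2t], ?_⟩
      intro i hi
      simp only [List.mem_cons, List.not_mem_nil, or_false] at hi
      rcases hi with rfl | rfl | rfl
      exacts [hST ha, ht, hST hb]
    have h2 := le_trans (length_le_chainHeight_of_mem_subchain hmem) hTn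
    have h3 : (3 : ℕ) ≤ 2 := by exact_mod_cast h2
    omega
  | (m + 3), IH, hTn, hSn, hlen =>
    have h0 : 0 < l.length := by omega
    have h1 : 1 < l.length := by omega
    have hm1 : m + 1 < l.length := by omega
    have hm2 : m + 2 < l.length := by omega
    set cbot := l[0] with hcbot_def
    set c1 := l[1] with hc1_def
    set c := l[m+1] with hc_def
    set ctop := l[m+2] with hctop_def
    have hc1S : c1 ∈ S := hlS _ (List.getElem_mem h1)
    have hcS : c ∈ S := hlS _ (List.getElem_mem hm1)
    have hc1c : c1 ≤ c := by
      rcases Nat.lt_or_ge 1 (m+1) with hlt | hge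
      · exact (hpw 1 (m+1) h1 hm1 hlt).le
      · have : m = 0 := by omega
        subst this
        exact le_refl _
    have hcancel : ∀ x : ℕ∞, x + 1 ≤ ((m + 3 : ℕ) : ℕ∞) → x ≤ ((m + 2 : ℕ) : ℕ∞) := by
      intro x hx
      have he : ((m + 3 : ℕ) : ℕ∞) = ((m + 2 : ℕ) : ℕ∞) + 1 := by push_cast; ring
      rw [he] at hx
      exact (ENat.add_le_add_iff_right (by simp)).mp hx
    -- Downward step: everything in `T` below `c` is in `S`.
    have hdown : ∀ t ∈ T, t ≤ c → t ∈ S := by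
      have hsub' : S ∩ Iic c ⊆ T ∩ Iic c := fun x hx => ⟨hST hx.1, hx.2⟩
      have hT' : IsSublattice (T ∩ Iic c) := by
        constructor
        · intro x hx y hy
          exact ⟨hT.supClosed hx.1 hy.1, sup_le hx.2 hy.2⟩
        · intro x hx y hy
          exact ⟨hT.infClosed hx.1 hy.1, le_trans inf_le_left hx.2⟩
      have hS' : RCClosed (S ∩ Iic c) := by
        intro u hu x hx v hv y h1' h2'
        exact ⟨hS u hu.1 x hx.1 v hv.1 y h1' h2', le_trans (h2' ▸ le_sup_right) hv.2⟩
      have hT'n : (T ∩ Iic c).chainHeight (· < ·) ≤ ((m + 2 : ℕ) : ℕ∞) := by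
        apply hcancel
        have hins := chainHeight_insert_of_forall_lt ctop
          (s := T ∩ Iic c) (fun b hb => lt_of_le_of_lt hb.2 (hpw (m+1) (m+2) hm1 hm2 (by omega)))
        have hsub : insert ctop (T ∩ Iic c) ⊆ T :=
          insert_subset (hST (hlS _ (List.getElem_mem hm2))) inter_subset_left
        calc (T ∩ Iic c).chainHeight (· < ·) + 1 = (insert ctop (T ∩ Iic c)).chainHeight (· < ·) := hins.symm
          _ ≤ T.chainHeight (· < ·) := chainHeight_mono _ _ _ hsub
          _ ≤ _ := hTn
      have hS'n : ((m + 2 : ℕ) : ℕ∞) ≤ (S ∩ Iic c).chainHeight (· < ·) := by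
        apply le_chainHeight_iff.mpr
        refine ⟨l.take (m + 2), ⟨hl.1.take _, ?_⟩, by simp [hlen]⟩
        intro x hx
        obtain ⟨i, hi, hxi⟩ := List.mem_iff_getElem.mp hx
        have hi' : i < m + 2 := by
          have : (l.take (m + 2)).length = min (m + 2) l.length := List.length_take
          omega
        have hil : i < l.length := by omega
        have hxl : x = l[i] := by rw [← hxi, List.getElem_take]
        constructor
        · exact hxl ▸ hlS _ (List.getElem_mem hil)
        · rcases Nat.lt_or_ge i (m + 1) with hlt | hge
          · exact hxl ▸ (hpw i (m+1) hil hm1 hlt).le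
          · have : i = m + 1 := by omega
            subst this
            exact le_of_eq hxl
      have := IH (m + 2) (by omega) (S ∩ Iic c) (T ∩ Iic c) hsub' hT' hS' hT'n hS'n
      intro t ht htc
      have ht' : t ∈ S ∩ Iic c := this ▸ (⟨ht, htc⟩ : t ∈ T ∩ Iic c)
      exact ht'.1
    -- Upward step: everything in `T` above `c1` is in `S`.
    have hup : ∀ t ∈ T, c1 ≤ t → t ∈ S := by
      have hsub' : S ∩ Ici c1 ⊆ T ∩ Ici c1 := fun x hx => ⟨hST hx.1, hx.2⟩
      have hT' : IsSublattice (T ∩ Ici c1) := by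
        constructor
        · intro x hx y hy
          exact ⟨hT.supClosed hx.1 hy.1, le_trans hx.2 le_sup_left⟩
        · intro x hx y hy
          exact ⟨hT.infClosed hx.1 hy.1, le_inf hx.2 hy.2⟩
      have hS' : RCClosed (S ∩ Ici c1) := by
        intro u hu x hx v hv y h1' h2'
        exact ⟨hS u hu.1 x hx.1 v hv.1 y h1' h2', le_trans hu.2 (h1' ▸ inf_le_right)⟩
      have hT'n : (T ∩ Ici c1).chainHeight (· < ·) ≤ ((m + 2 : ℕ) : ℕ∞) := by
        apply hcancel
        have hins := chainHeight_insert_of_forall_gt cbot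
          (s := T ∩ Ici c1) (fun b hb => lt_of_lt_of_le (hpw 0 1 h0 h1 (by omega)) hb.2)
        have hsub : insert cbot (T ∩ Ici c1) ⊆ T :=
          insert_subset (hST (hlS _ (List.getElem_mem h0))) inter_subset_left
        calc (T ∩ Ici c1).chainHeight (· < ·) + 1 = (insert cbot (T ∩ Ici c1)).chainHeight (· < ·) := hins.symm
          _ ≤ T.chainHeight (· < ·) := chainHeight_mono _ _ _ hsub
          _ ≤ _ := hTn
      have hS'n : ((m + 2 : ℕ) : ℕ∞) ≤ (S ∩ Ici c1).chainHeight (· < ·) := by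
        apply le_chainHeight_iff.mpr
        refine ⟨l.drop 1, ⟨hl.1.drop _, ?_⟩, by simp [hlen]⟩
        intro x hx
        obtain ⟨i, hi, hxi⟩ := List.mem_iff_getElem.mp hx
        have hi' : i < m + 2 := by
          rw [List.length_drop, hlen] at hi
          omega
        have hil : 1 + i < l.length := by omega
        have hxl : x = l[1 + i] := by rw [← hxi, List.getElem_drop]
        constructor
        · exact hxl ▸ hlS _ (List.getElem_mem hil)
        · rcases Nat.eq_or_lt_of_le (Nat.le_add_right 1 i) with heq | hlt
          · have hi0 : i = 0 := by omega
            subst hi0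
            rw [hxl]
            exact le_of_eq rfl
          · exact hxl ▸ (hpw 1 (1+i) h1 hil hlt).le
      have := IH (m + 2) (by omega) (S ∩ Ici c1) (T ∩ Ici c1) hsub' hT' hS' hT'n hS'n
      intro t ht htc
      have ht' : t ∈ S ∩ Ici c1 := this ▸ (⟨ht, htc⟩ : t ∈ T ∩ Ici c1)
      exact ht'.1
    refine Set.Subset.antisymm hST (fun t ht => ?_)
    have hu : c ⊓ t ∈ S := hdown _ (hT.infClosed (hST hcS) ht) inf_le_left
    have hv : c ⊔ t ∈ S := hup _ (hT.supClosed (hST hcS) ht) (le_trans hc1c le_sup_left)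
    exact hS _ hu c hcS _ hv t rfl rfl

/-- Strict monotonicity of chain height along proper inclusions of RC-closed sublattices. -/
lemma chainHeight_lt_of_ssubset {S T : Set α} (hST : S ⊂ T) (hT : IsSublattice T)
    (hS : RCClosed S) (hfin : T.chainHeight (· < ·) ≠ ⊤) : S.chainHeight (· < ·) < T.chainHeight (· < ·) := by
  refine lt_of_le_of_ne (chainHeight_mono _ _ _ hST.subset) (fun he => ?_)
  obtain ⟨n, hn⟩ := WithTop.ne_top_iff_exists.mp hfin
  exact hST.ne (rc_key n S T hST.subset hT hS hn.ge (hn.le.trans he.ge))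

end Auxiliary

/-- If `L` is a lattice of finite length, then
`length (RCSub L) = 1 + length L`. (Here `Set.chainHeight` of `univ` is `length + 1`,
so the equation is stated in the equivalent shifted form.) -/
theorem length_rcsub [Lattice α] (h : (univ : Set α).chainHeight (· < ·) ≠ ⊤) :
    (univ : Set (RCSub α)).chainHeight (· < ·) = 1 + (univ : Set α).chainHeight (· < ·) := by
  obtain ⟨N, hN⟩ := WithTop.ne_top_iff_exists.mp h
  have hboundall : ∀ X : RCSub α, X.1.chainHeight (· < ·) ≤ (N : ℕ∞) :=
    fun X => le_trans (chainHeight_mono _ _ _ (subset_univ _)) hN.ge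
  -- the natural-number height function
  set g : RCSub α → ℕ := fun X => (X.1.chainHeight (· < ·)).toNat with hg_def
  have hgmono : ∀ X Y : RCSub α, X < Y → g X < g Y := by
    intro X Y hXY
    have hssub : X.1 ⊂ Y.1 := hXY
    have hlt : X.1.chainHeight (· < ·) < Y.1.chainHeight (· < ·) :=
      chainHeight_lt_of_ssubset hssub Y.2.1 X.2.2
        (fun he => (he ▸ hboundall Y).not_gt (by simp))
    have hXfin : X.1.chainHeight (· < ·) ≠ ⊤ := fun he => (he ▸ hboundall X).not_gt (by simp)
    have hYfin : Y.1.chainHeight (· < ·) ≠ ⊤ := fun he => (he ▸ hboundall Y).not_gt (by simp)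
    obtain ⟨a, ha⟩ := WithTop.ne_top_iff_exists.mp hXfin
    obtain ⟨b, hb⟩ := WithTop.ne_top_iff_exists.mp hYfin
    have hga : g X = a := by rw [hg_def]; simp only [← ha]; rfl
    have hgb : g Y = b := by rw [hg_def]; simp only [← hb]; rfl
    rw [hga, hgb]
    rw [← ha, ← hb] at hlt
    exact ENat.coe_lt_coe.mp hlt
  have hgbound : ∀ X : RCSub α, g X ≤ N := by
    intro X
    have hXfin : X.1.chainHeight (· < ·) ≠ ⊤ := fun he => (he ▸ hboundall X).not_gt (by simp)
    obtain ⟨a, ha⟩ := WithTop.ne_top_iff_exists.mp hXfin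
    have hle := hboundall X
    rw [← ha] at hle
    have hga : g X = a := by rw [hg_def]; simp only [← ha]; rfl
    rw [hga]
    exact ENat.coe_le_coe.mp hle
  -- upper bound
  have hupper : (univ : Set (RCSub α)).chainHeight (· < ·) ≤ ((N + 1 : ℕ) : ℕ∞) := by
    by_contra hcon
    push_neg at hcon
    have h2 : ((N + 2 : ℕ) : ℕ∞) ≤ (univ : Set (RCSub α)).chainHeight (· < ·) := by
      have := Order.add_one_le_of_lt hcon
      calc ((N + 2 : ℕ) : ℕ∞) = ((N + 1 : ℕ) : ℕ∞) + 1 := by push_cast; ring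
        _ ≤ _ := this
    obtain ⟨L, hL, hLlen⟩ := exists_chain_of_le_chainHeight _ h2
    -- map to ℕ
    have hmap : (L.map g).IsChain (· < ·) := by
      rw [List.isChain_map]
      exact hL.1.imp (fun a b hab => hgmono a b hab)
    have hnd : (L.map g).Nodup :=
      (List.isChain_iff_pairwise.mp hmap).imp (fun h => ne_of_lt h)
    have hsubF : (L.map g).toFinset ⊆ Finset.range (N + 1) := by
      intro x hx
      obtain ⟨X, _, rfl⟩ := List.mem_map.mp (List.mem_toFinset.mp hx)
      exact Finset.mem_range.mpr (Nat.lt_succ_of_le (hgbound X))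
    have hcard : (L.map g).length ≤ N + 1 := by
      calc (L.map g).length = (L.map g).toFinset.card := (List.toFinset_card_of_nodup hnd).symm
        _ ≤ (Finset.range (N + 1)).card := Finset.card_le_card hsubF
        _ = N + 1 := Finset.card_range _
    rw [List.length_map, hLlen] at hcard
    omega
  -- lower bound
  have hlower : ((N + 1 : ℕ) : ℕ∞) ≤ (univ : Set (RCSub α)).chainHeight (· < ·) := by
    obtain ⟨l, hl, hllen⟩ := exists_chain_of_le_chainHeight (univ : Set α) hN.le
    set eS : RCSub α := ⟨∅, isSublattice_empty, rcClosed_empty⟩ with heS_def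
    set f : α → RCSub α := fun a => ⟨Ici a, isSublattice_Ici a, rcClosed_Ici a⟩ with hf_def
    have hgt : ((l.map f) ++ [eS]).IsChain (· > ·) := by
      apply List.IsChain.append
      · rw [List.isChain_map]
        refine hl.1.imp (fun a b hab => ?_)
        show f b < f a
        rw [hf_def]
        refine Subtype.mk_lt_mk.mpr (lt_of_le_of_ne (Ici_subset_Ici.mpr hab.le) (fun he => ?_))
        have : a ∈ Ici b := he ▸ self_mem_Ici
        exact absurd (lt_of_lt_of_le hab this) (lt_irrefl a)
      · simp
      · intro x hx y hy
        simp only [List.head?_cons, Option.mem_def, Option.some.injEq] at hy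
        subst hy
        have hxm : x ∈ l.map f := List.mem_of_mem_getLast? hx
        obtain ⟨a, _, rfl⟩ := List.mem_map.mp hxm
        show eS < f a
        rw [heS_def, hf_def]
        exact Subtype.mk_lt_mk.mpr (Set.empty_ssubset.mpr ⟨a, self_mem_Ici⟩)
    have hrev : (((l.map f) ++ [eS]).reverse).IsChain (· < ·) := by
      rw [List.isChain_reverse]
      exact hgt
    have hmem : (((l.map f) ++ [eS]).reverse) ∈ (univ : Set (RCSub α)).subchain :=
      ⟨hrev, fun x _ => mem_univ x⟩
    have := length_le_chainHeight_of_mem_subchain hmem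
    simpa [hllen, Nat.add_comm] using this
  have : (univ : Set (RCSub α)).chainHeight (· < ·) = ((N + 1 : ℕ) : ℕ∞) := le_antisymm hupper hlower
  rw [this, ← hN]
  push_cast
  exact add_comm _ _
end

section
/- Let D be a finite Boolean lattice, c_0 ∈ D, and b_1, ..., b_{k+1} elements of the filter ↑c_0 such that all b_i ≠ c_0, and for each i with 2 ≤ i ≤ k+1, (b_1 ∨ ... ∨ b_{i-1}) ∧ b_i = c_0. Then {b_1, ..., b_{k+1}} generates a Boolean sublattice of ↑c_0 with exactly 2^{k+1} elements. -/
open Set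

variable {α : Type*}

/-- In a finite Boolean lattice `D`, if `b 0, ..., b k` are elements of
the filter `↑c₀`, all different from `c₀`, such that
`(b 0 ∨ ... ∨ b (m-1)) ⊓ b m = c₀` for `1 ≤ m ≤ k`, then `{c₀, b 0, ..., b k}` generates
a sublattice of the filter `↑c₀` with exactly `2 ^ (k + 1)` elements which is Boolean
(closed under relative complementation). -/
theorem independent_generates_boolean (D : Type*) [BooleanAlgebra D] [Fintype D] (k : ℕ)
    (c₀ : D) (b : Fin (k + 1) → D)
    (hge : ∀ j, c₀ ≤ b j) (hne : ∀ j, b j ≠ c₀)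
    (hind : ∀ m : Fin (k + 1), 1 ≤ (m : ℕ) →
      ((Finset.univ.filter (fun j => j < m)).sup b) ⊓ b m = c₀) :
    (latticeClosure (insert c₀ (Set.range b))).ncard = 2 ^ (k + 1) ∧
    latticeClosure (insert c₀ (Set.range b)) ⊆ Set.Ici c₀ ∧
    (∀ u ∈ latticeClosure (insert c₀ (Set.range b)),
      ∀ x ∈ latticeClosure (insert c₀ (Set.range b)),
        ∀ v ∈ latticeClosure (insert c₀ (Set.range b)), u ≤ x → x ≤ v →
          ∃ y ∈ latticeClosure (insert c₀ (Set.range b)), x ⊓ y = u ∧ x ⊔ y = v) := by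
  classical
  set G := insert c₀ (Set.range b) with hG
  set f : Finset (Fin (k+1)) → D := fun S => c₀ ⊔ S.sup b with hf
  -- pairwise meets
  have hpair : ∀ i j : Fin (k + 1), i ≠ j → b i ⊓ b j = c₀ := by
    have key : ∀ i j : Fin (k + 1), i < j → b i ⊓ b j = c₀ := by
      intro i j hij
      apply le_antisymm
      · have h1 : b i ≤ (Finset.univ.filter (fun t => t < j)).sup b :=
          Finset.le_sup (by simp [hij])
        calc b i ⊓ b j ≤ (Finset.univ.filter (fun t => t < j)).sup b ⊓ b j :=
              inf_le_inf_right _ h1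
          _ = c₀ := hind j (by omega)
      · exact le_inf (hge i) (hge j)
    intro i j hij
    rcases lt_or_gt_of_ne hij with h | h
    · exact key i j h
    · rw [inf_comm]; exact key j i h
  have hsup : ∀ S T, f S ⊔ f T = f (S ∪ T) := by
    intro S T
    simp only [hf, Finset.sup_union]
    rw [sup_sup_sup_comm, sup_idem]
  have hinf : ∀ S T, f S ⊓ f T = f (S ∩ T) := by
    intro S T
    simp only [hf]
    rw [← sup_inf_left]
    apply le_antisymm
    · apply sup_le le_sup_left
      rw [Finset.sup_inf_distrib_right]
      apply Finset.sup_le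
      intro i hi
      rw [Finset.sup_inf_distrib_left]
      apply Finset.sup_le
      intro j hj
      rcases eq_or_ne i j with rfl | hij
      · exact le_trans (by simp) (le_sup_of_le_right (Finset.le_sup (Finset.mem_inter.2 ⟨hi, hj⟩)))
      · rw [hpair i j hij]; exact le_sup_left
    · apply sup_le le_sup_left
      apply le_sup_of_le_right
      exact le_inf (Finset.sup_mono Finset.inter_subset_left)
        (Finset.sup_mono Finset.inter_subset_right)
  have hmono : ∀ S T : Finset (Fin (k+1)), f S ≤ f T → S ⊆ T := by
    intro S T hle i hi
    by_contra hiT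
    have h1 : b i ≤ f T := by
      refine le_trans ?_ hle
      exact le_sup_of_le_right (Finset.le_sup hi)
    have h2 : b i ⊓ f T = b i := inf_eq_left.2 h1
    have h3 : b i ⊓ f T = c₀ := by
      simp only [hf]
      rw [inf_sup_left, Finset.sup_inf_distrib_left]
      have : (T.sup fun j => b i ⊓ b j) ≤ c₀ := by
        apply Finset.sup_le
        intro j hj
        rw [hpair i j (by rintro rfl; exact hiT hj)]
      rw [inf_eq_right.2 (hge i)]
      exact le_antisymm (sup_le le_rfl this) le_sup_left
    exact hne i (h2.symm.trans h3)
  have hlef : ∀ S T : Finset (Fin (k+1)), S ⊆ T → f S ≤ f T := by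
    intro S T h
    exact sup_le_sup_left (Finset.sup_mono h) _
  have hinj : Function.Injective f := by
    intro S T h
    exact le_antisymm (hmono _ _ h.le) (hmono _ _ h.ge)
  -- closure equals range f
  have hfc : f ∅ = c₀ := by simp [hf]
  have hfb : ∀ j, f {j} = b j := by
    intro j; simp [hf, sup_eq_right.2 (hge j)]
  have hclos : latticeClosure G = Set.range f := by
    apply le_antisymm
    · apply latticeClosure_min
      · rintro x (rfl | ⟨j, rfl⟩)
        · exact ⟨∅, hfc⟩
        · exact ⟨{j}, hfb j⟩
      · constructor
        · rintro _ ⟨S, rfl⟩ _ ⟨T, rfl⟩; exact ⟨S ⊔ T, (hsup S T).symm⟩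
        · rintro _ ⟨S, rfl⟩ _ ⟨T, rfl⟩; exact ⟨S ⊓ T, (hinf S T).symm⟩
    · rintro _ ⟨S, rfl⟩
      induction S using Finset.induction_on with
      | empty => rw [hfc]; exact subset_latticeClosure (by simp [hG])
      | @insert a S hns ih =>
        have : f (insert a S) = f {a} ⊔ f S := by
          rw [hsup, Finset.insert_eq]
        rw [this, hfb]
        exact isSublattice_latticeClosure.1
          (subset_latticeClosure (by simp [hG])) ih
  rw [hclos]
  refine ⟨?_, ?_, ?_⟩
  · rw [← Set.image_univ, Set.ncard_image_of_injective _ hinj, Set.ncard_univ,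
      Nat.card_eq_fintype_card, Fintype.card_finset, Fintype.card_fin]
  · rintro _ ⟨S, rfl⟩; exact le_sup_left
  · rintro _ ⟨U, rfl⟩ _ ⟨X, rfl⟩ _ ⟨V, rfl⟩ hux hxv
    have hUX : U ⊆ X := hmono _ _ hux
    have hXV : X ⊆ V := hmono _ _ hxv
    refine ⟨f (U ∪ (V \ X)), ⟨_, rfl⟩, ?_, ?_⟩
    · rw [hinf]
      congr 1
      ext i
      simp only [Finset.mem_inter, Finset.mem_union, Finset.mem_sdiff]
      constructor
      · rintro ⟨hX, hU | ⟨_, hnX⟩⟩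
        · exact hU
        · exact absurd hX hnX
      · intro hU; exact ⟨hUX hU, Or.inl hU⟩
    · rw [hsup]
      congr 1
      ext i
      simp only [Finset.mem_union, Finset.mem_sdiff]
      constructor
      · rintro (hX | hU | ⟨hV, _⟩)
        · exact hXV hX
        · exact hXV (hUX hU)
        · exact hV
      · intro hV
        by_cases hX : i ∈ X
        · exact Or.inl hX
        · exact Or.inr (Or.inr ⟨hV, hX⟩)
end

section
/- Let L be a lattice of finite length and let Y_{-1} ⊂ Y_0 ⊂ ... ⊂ Y_k = L be a strictly increasing chain in RCSub(L) (with Y_{-1} possibly empty). Then length(Y_{i-1}) < length(Y_i) for all i with 0 ≤ i ≤ k, and consequently k ≤ 1 + length(L). -/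
open Set

variable {α : Type*}

private lemma relSeries_le_chainHeight [Preorder α] {s : Set α}
    (p : LTSeries α) (hp : ∀ i, p i ∈ s) :
    ((p.length : ℕ∞) + 1) ≤ s.chainHeight (· < ·) := by
  have hc : IsChain (· < ·) (Set.range p) := by
    rintro _ ⟨i, rfl⟩ _ ⟨j, rfl⟩ hne
    rcases lt_trichotomy i j with hij | hij | hij
    · exact Or.inl (p.strictMono hij)
    · exact absurd (congrArg p hij) hne
    · exact Or.inr (p.strictMono hij)
  have h1 := Set.encard_le_chainHeight_of_isChain s (Set.range p)
    (by rintro _ ⟨i, rfl⟩; exact hp i) hc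
  have h2 := p.strictMono.injective.encard_range
  refine le_trans ?_ (h2.trans h1)
  simp

private lemma exists_relSeries_aux [Preorder α] : ∀ (n : ℕ) (t : Set α), IsChain (· < ·) t →
    t.encard = ((n + 1 : ℕ) : ℕ∞) → ∃ p : LTSeries α, p.length = n ∧ ∀ i, p i ∈ t := by
  intro n
  induction n with
  | zero =>
      intro t _ ht
      obtain ⟨x, rfl⟩ := Set.encard_eq_one.mp (by simpa using ht)
      exact ⟨RelSeries.singleton _ x, rfl, fun i => Set.mem_singleton x⟩
  | succ n ih =>
      intro t hc ht
      have hfin : t.Finite := Set.finite_of_encard_eq_coe ht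
      have hne : t.Nonempty := by
        rw [← Set.encard_pos, ht]; exact_mod_cast Nat.succ_pos _
      obtain ⟨m, hm⟩ := hfin.exists_maximal hne
      have ht' : (t \ {m}).encard = ((n + 1 : ℕ) : ℕ∞) := by
        have := Set.encard_sdiff_singleton_add_one hm.1
        rw [ht] at this
        have h3 : (((n + 1 : ℕ) : ℕ∞) + 1) = ((n + 1 + 1 : ℕ) : ℕ∞) := by push_cast; rfl
        rw [← h3] at this
        exact ENat.add_left_injective_of_ne_top ENat.one_ne_top this
      obtain ⟨p, hpl, hp⟩ := ih (t \ {m}) (hc.mono Set.diff_subset) ht'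
      have hlt : p.last < m := by
        have hl := hp (Fin.last _)
        rcases hc hl.1 hm.1 (fun he => hl.2 he) with h4 | h4
        · exact h4
        · exact absurd (hm.2 hl.1 h4.le) (not_le_of_gt h4)
      refine ⟨p.snoc m hlt, by simp [hpl], fun i => ?_⟩
      induction i using Fin.lastCases with
      | last => convert hm.1 using 1; exact RelSeries.last_snoc p m hlt
      | cast j => convert (hp j).1 using 1; exact RelSeries.snoc_castSucc p m hlt j

private lemma exists_relSeries [Preorder α] {s : Set α} {n : ℕ}
    (hn : ((n : ℕ∞) + 1) ≤ s.chainHeight (· < ·)) :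
    ∃ p : LTSeries α, p.length = n ∧ ∀ i, p i ∈ s := by
  obtain ⟨t, hts, hte, htc⟩ := Set.exists_isChain_of_le_chainHeight (r := (· < ·)) (s := s) (n + 1)
    (by exact_mod_cast hn)
  obtain ⟨p, hpl, hp⟩ := exists_relSeries_aux n t htc hte
  exact ⟨p, hpl, fun i => hts (hp i)⟩

private lemma rc_eq_height_subset [Lattice α] {S T : Set α}
    (hT : IsSublattice T) (hSrc : RCClosed S) (hST : S ⊆ T)
    (hTtop : T.chainHeight (· < ·) ≠ ⊤) (hEq : S.chainHeight (· < ·) = T.chainHeight (· < ·)) :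
    T ⊆ S := by
  lift T.chainHeight (· < ·) to ℕ using hTtop with n hn
  rcases n with _ | m
  · have : T = ∅ := (Set.chainHeight_eq_zero_iff _ _).mp hn.symm
    simp [this]
  obtain ⟨p, hplen, hpS⟩ := exists_relSeries (s := S) (n := m)
    (by rw [hEq]; norm_cast)
  have hpT : ∀ i, p i ∈ T := fun i => hST (hpS i)
  have hmax : ∀ q : LTSeries α, (∀ i, q i ∈ T) → q.length ≤ m := by
    intro q hq
    have h1 := relSeries_le_chainHeight q hq
    rw [← hn] at h1
    have h2 : ((q.length + 1 : ℕ) : ℕ∞) ≤ ((m + 1 : ℕ) : ℕ∞) := by push_cast; simpa using h1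
    exact Nat.succ_le_succ_iff.mp (by exact_mod_cast h2)
  have hhead : ∀ x ∈ T, p.head ≤ x := by
    intro x hx
    by_contra hle
    have hlt : x ⊓ p.head < p.head :=
      lt_of_le_of_ne inf_le_right (fun hc => hle (inf_eq_right.mp hc))
    let q : LTSeries α :=
      ⟨p.length + 1, Fin.cons (x ⊓ p.head) p, by
        intro j
        induction j using Fin.cases with
        | zero =>
            simp only [Fin.castSucc_zero, Fin.cons_zero, Fin.cons_succ]
            exact hlt
        | succ i =>
            rw [← Fin.succ_castSucc]
            simp only [Fin.cons_succ]
            exact p.step i⟩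
    have hq : ∀ i, q i ∈ T := by
      intro i
      induction i using Fin.cases with
      | zero => exact hT.infClosed hx (hpT 0)
      | succ j =>
          show Fin.cons (α := fun _ => α) (x ⊓ p.head) ⇑p j.succ ∈ T
          rw [Fin.cons_succ]
          exact hpT j
    have := hmax q hq
    simp [q, hplen] at this
  have hlast : ∀ x ∈ T, x ≤ p.last := by
    intro x hx
    by_contra hle
    have hlt : p.last < x ⊔ p.last :=
      lt_of_le_of_ne le_sup_right (fun hc => hle (sup_eq_right.mp hc.symm))
    let q : LTSeries α :=
      ⟨p.length + 1, Fin.snoc p (x ⊔ p.last), by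
        intro j
        induction j using Fin.lastCases with
        | last =>
            rw [Fin.succ_last]
            simp only [Fin.snoc_castSucc, Fin.snoc_last]
            exact hlt
        | cast i =>
            rw [Fin.succ_castSucc]
            simp only [Fin.snoc_castSucc]
            exact p.step i⟩
    have hq : ∀ i, q i ∈ T := by
      intro i
      induction i using Fin.lastCases with
      | last =>
          show Fin.snoc (α := fun _ => α) ⇑p (x ⊔ p.last) (Fin.last _) ∈ T
          rw [Fin.snoc_last]
          exact hT.supClosed hx (hpT (Fin.last _))
      | cast j =>
          show Fin.snoc (α := fun _ => α) ⇑p (x ⊔ p.last) j.castSucc ∈ T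
          rw [Fin.snoc_castSucc]
          exact hpT j
    have := hmax q hq
    simp [q, hplen] at this
  have hcov : ∀ (i : Fin p.length), ∀ z ∈ T, p i.castSucc < z → z < p i.succ → False := by
    intro i z hz h1 h2
    let q := p.insertNth i z h1 h2
    have hq : ∀ j, q j ∈ T := by
      intro j
      rcases eq_or_ne j (Fin.castSucc i.succ) with rfl | hne
      · convert hz using 1
        exact Fin.insertNth_apply_same (α := fun _ => α) (Fin.castSucc i.succ) z ⇑p
      · obtain ⟨j', hj'⟩ := Fin.exists_succAbove_eq hne
        rw [← hj']
        convert hpT j' using 1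
        exact Fin.insertNth_apply_succAbove (α := fun _ => α) (Fin.castSucc i.succ) z ⇑p j'
    have := hmax q hq
    simp [q, hplen] at this
  intro y hy
  have main : ∀ i : Fin (p.length + 1), y ⊓ p i ∈ S := by
    intro i
    induction i using Fin.induction with
    | zero =>
        have h0 : y ⊓ p 0 = p 0 := inf_eq_right.mpr (hhead y hy)
        rw [h0]; exact hpS 0
    | succ i ih =>
        set a := y ⊓ p i.succ with ha
        have haT : a ∈ T := hT.infClosed hy (hpT i.succ)
        have hstep := p.step i
        have hxa : p i.castSucc ⊓ a = y ⊓ p i.castSucc := by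
          rw [ha, inf_comm (p i.castSucc), inf_assoc, inf_comm (p i.succ),
            inf_eq_left.mpr hstep.le]
        have hvT : p i.castSucc ⊔ a ∈ T := hT.supClosed (hpT i.castSucc) haT
        have hvle : p i.castSucc ⊔ a ≤ p i.succ := sup_le hstep.le inf_le_right
        rcases hvle.lt_or_eq with hvlt | hveq
        · rcases (le_sup_left : p i.castSucc ≤ p i.castSucc ⊔ a).eq_or_lt with hvB | hvB
          · have hale : a ≤ p i.castSucc := le_sup_right.trans hvB.ge
            have hae : a = y ⊓ p i.castSucc := le_antisymm
              (le_inf inf_le_left hale)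
              (le_inf inf_le_left (inf_le_right.trans hstep.le))
            rw [hae]; exact ih
          · exact (hcov i _ hvT hvB hvlt).elim
        · exact hSrc (y ⊓ p i.castSucc) ih (p i.castSucc) (hpS i.castSucc)
            (p i.succ) (hpS i.succ) a hxa (by rw [hveq])
  have hfin := main (Fin.last _)
  have hy' : y ⊓ p (Fin.last _) = y := inf_eq_left.mpr (hlast y hy)
  rwa [hy'] at hfin

/-- Let `L` be a lattice of finite length and
`Y 0 ⊂ Y 1 ⊂ ... ⊂ Y (k+1) = L` a strictly increasing chain in `RCSub L`
(`Y 0` playing the role of the paper's `Y₋₁`, possibly empty, and `Y (k+1)` of `Y_k = L`).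
Then the `chainHeight`s (= lengths + 1) strictly increase along the chain, and
`k ≤ 1 + length L`, i.e. `k ≤ chainHeight L`. -/
theorem chain_in_rcsub [Lattice α] (h : (univ : Set α).chainHeight (· < ·) ≠ ⊤) (k : ℕ)
    (Y : Fin (k + 2) → RCSub α) (hmono : StrictMono Y)
    (hlast : (Y (Fin.last (k + 1))).val = univ) :
    (∀ i : Fin (k + 1), (Y i.castSucc).val.chainHeight (· < ·) < (Y i.succ).val.chainHeight (· < ·)) ∧
    (k : ℕ∞) ≤ (univ : Set α).chainHeight (· < ·) := by
  have hstep : ∀ i : Fin (k + 1),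
      (Y i.castSucc).val.chainHeight (· < ·) < (Y i.succ).val.chainHeight (· < ·) := by
    intro i
    have hlt : Y i.castSucc < Y i.succ := hmono (Fin.castSucc_lt_succ (i := i))
    have hssub : (Y i.castSucc).val ⊂ (Y i.succ).val := hlt
    have hle := Set.chainHeight_mono (r := (· < ·)) _ _ hssub.subset
    refine lt_of_le_of_ne hle (fun heq => ?_)
    have hTtop : (Y i.succ).val.chainHeight (· < ·) ≠ ⊤ :=
      fun hc => h (top_le_iff.mp (hc ▸ Set.chainHeight_mono (r := (· < ·)) _ _ (Set.subset_univ _)))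
    have hsub := rc_eq_height_subset (Y i.succ).2.1 (Y i.castSucc).2.2 hssub.subset hTtop heq
    exact hssub.not_subset hsub
  refine ⟨hstep, ?_⟩
  have hbound : ∀ i : Fin (k + 2), (i.val : ℕ∞) ≤ (Y i).val.chainHeight (· < ·) := by
    intro i
    induction i using Fin.induction with
    | zero => simp
    | succ j ih =>
        have h1 : ((j.val : ℕ∞)) < (Y j.succ).val.chainHeight (· < ·) := lt_of_le_of_lt ih (hstep j)
        have h2 : ((j.val : ℕ∞)) + 1 ≤ (Y j.succ).val.chainHeight (· < ·) :=
          (ENat.add_one_le_iff (by exact_mod_cast ENat.coe_ne_top j.val)).mpr h1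
        simpa [Fin.val_succ] using h2
  have hfin := hbound (Fin.last (k + 1))
  rw [hlast] at hfin
  have : ((k : ℕ∞)) ≤ (k + 1 : ℕ∞) := by
    exact_mod_cast le_self_add
  refine this.trans ?_
  simpa [Fin.val_last] using hfin
end
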